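/- In the setting of the unwanted generalization theorem, if max_i p_{θ_i}(z_i*) = 1−ε with ε ∈ (0,1), then the gradient alignment condition at every coordinate requires m ≤ M₀ − (ΔM/d)·(1/(1−ε))^{d−1}; in particular the required m diverges to −∞ at rate Θ(c^d/d) with c = 1/(1−ε) > 1 as d → ∞. -/

import Mathlib

/-!
Write `J = M₀ - (ΔM/d)·d_H(·, z*) + (m - M₀)·1_{z*}`. Under the product measure
`E[d_H(·, z*)] = ∑ⱼ p_{θⱼ}(¬z*ⱼ)`, so `E_θ[J] = M₀ - (ΔM/d)·∑ⱼ p_{θⱼ}(¬z*ⱼ) + (m - M₀)·P_θ(z*)`.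
With `σ = ±1` the sign of `z*ᵢ` and `C = ∏_{j ≠ i} p_{θⱼ}(z*ⱼ)`, differentiating in `θᵢ` gives
`∂P_θ(z*) = σC` and `∂E_θ[J] = σ(ΔM/d + (m - M₀)C)`. Since `σ² = 1` and `C > 0`, alignment at `i`
forces `ΔM/d + (m - M₀)C ≤ 0`, i.e. `m ≤ M₀ - ΔM/(dC)`, and `C ≤ (1 - ε)^(d-1)`.
-/

open Finset Function

section BernoulliProduct

variable {ι : Type*} [DecidableEq ι]

def bernoulliWeight (p : ℝ) (b : Bool) : ℝ := if b then p else 1 - p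

lemma bernoulliWeight_pos {p : ℝ} (hp : p ∈ Set.Ioo 0 1) (b : Bool) : 0 < bernoulliWeight p b := by
  cases b <;> simp [bernoulliWeight, hp.1, hp.2]

lemma sum_bernoulliWeight (p : ℝ) : ∑ b, bernoulliWeight p b = 1 := by
  simp [bernoulliWeight]

def boolSign (b : Bool) : ℝ := if b then 1 else -1

lemma boolSign_not (b : Bool) : boolSign (!b) = -boolSign b := by
  cases b <;> simp [boolSign]

lemma boolSign_mul_self (b : Bool) : boolSign b * boolSign b = 1 := by
  cases b <;> simp [boolSign]

lemma hasDerivAt_bernoulliWeight (b : Bool) (x : ℝ) :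
    HasDerivAt (fun t => bernoulliWeight t b) (boolSign b) x := by
  cases b
  · simpa [bernoulliWeight, boolSign] using (hasDerivAt_id' x).const_sub 1
  · simpa [bernoulliWeight, boolSign] using hasDerivAt_id' x

lemma hasDerivAt_bernoulliWeight_update (θ : ι → ℝ) (i j : ι) (b : Bool) (x : ℝ) :
    HasDerivAt (fun t => bernoulliWeight (update θ i t j) b)
      (if j = i then boolSign b else 0) x := by
  by_cases hj : j = i
  · subst hj
    simpa only [update_self, if_true] using hasDerivAt_bernoulliWeight b x
  · simpa only [update_of_ne hj, hj, if_false] using hasDerivAt_const x _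

variable [Fintype ι]

def bernoulliProd (p : ι → ℝ) (z : ι → Bool) : ℝ := ∏ j, bernoulliWeight (p j) (z j)

def hammingObjective (w : ι → Bool) (m M₀ c : ℝ) (z : ι → Bool) : ℝ :=
  if z = w then m else M₀ - hammingDist z w * c

lemma sum_bernoulliProd (p : ι → ℝ) : ∑ z, bernoulliProd p z = 1 := by
  simp only [bernoulliProd, ← Fintype.prod_sum, sum_bernoulliWeight, prod_const_one]

lemma sum_bernoulliProd_mul_ite_eq (p : ι → ℝ) (k : ι) (b : Bool) :
    ∑ z, bernoulliProd p z * (if z k = b then 1 else 0) = bernoulliWeight (p k) b := by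
  let g : ι → Bool → ℝ := fun j c =>
    bernoulliWeight (p j) c * if j = k then (if c = b then 1 else 0) else 1
  have hg : ∀ j, ∑ c, g j c = if j = k then bernoulliWeight (p k) b else 1 := by
    intro j
    split_ifs with hj
    · simp [g, hj]
    · simp only [g, hj, if_false, mul_one, sum_bernoulliWeight]
  calc ∑ z, bernoulliProd p z * (if z k = b then 1 else 0)
      = ∑ z : ι → Bool, ∏ j, g j (z j) := by
        simp only [g, bernoulliProd, prod_mul_distrib, prod_ite_eq', mem_univ, if_true]
    _ = ∏ j, ∑ c, g j c := (Fintype.prod_sum g).symm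
    _ = bernoulliWeight (p k) b := by simp only [hg, prod_ite_eq', mem_univ, if_true]

lemma sum_bernoulliProd_mul_hammingDist (p : ι → ℝ) (w : ι → Bool) :
    ∑ z, bernoulliProd p z * hammingDist z w = ∑ j, bernoulliWeight (p j) (!w j) := by
  have hdist : ∀ z : ι → Bool, (hammingDist z w : ℝ) = ∑ j, if z j = !w j then 1 else 0 := by
    intro z
    simp only [hammingDist, card_filter, Nat.cast_sum, Nat.cast_ite, Nat.cast_one, Nat.cast_zero,
      Bool.eq_not]
  simp only [hdist, mul_sum]
  rw [sum_comm]
  exact sum_congr rfl fun j _ => sum_bernoulliProd_mul_ite_eq p j (!w j)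

lemma sum_bernoulliProd_mul_hammingObjective (p : ι → ℝ) (w : ι → Bool) (m M₀ c : ℝ) :
    ∑ z, bernoulliProd p z * hammingObjective w m M₀ c z
      = M₀ - c * ∑ j, bernoulliWeight (p j) (!w j) + (m - M₀) * bernoulliProd p w := by
  have hsplit : ∀ z, bernoulliProd p z * hammingObjective w m M₀ c z
      = M₀ * bernoulliProd p z - c * (bernoulliProd p z * hammingDist z w)
        + (m - M₀) * (if z = w then bernoulliProd p z else 0) := by
    intro z
    unfold hammingObjective
    split_ifs with h
    · simp only [h, hammingDist_self, Nat.cast_zero]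
      ring
    · ring
  rw [sum_congr rfl fun z _ => hsplit z, sum_add_distrib, sum_sub_distrib, ← mul_sum, ← mul_sum,
    ← mul_sum, sum_bernoulliProd, sum_bernoulliProd_mul_hammingDist, Fintype.sum_ite_eq', mul_one]

lemma hasDerivAt_sum_bernoulliWeight_update (θ : ι → ℝ) (i : ι) (w : ι → Bool) (x : ℝ) :
    HasDerivAt (fun t => ∑ j, bernoulliWeight (update θ i t j) (w j)) (boolSign (w i)) x := by
  simpa only [Fintype.sum_ite_eq'] using
    HasDerivAt.fun_sum (u := univ) fun j _ => hasDerivAt_bernoulliWeight_update θ i j (w j) x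

lemma hasDerivAt_bernoulliProd_update (θ : ι → ℝ) (i : ι) (z : ι → Bool) :
    HasDerivAt (fun t => bernoulliProd (update θ i t) z)
      (boolSign (z i) * ∏ j ∈ univ.erase i, bernoulliWeight (θ j) (z j)) (θ i) := by
  have := HasDerivAt.fun_finsetProd (u := univ)
    fun j _ => hasDerivAt_bernoulliWeight_update θ i j (z j) (θ i)
  rw [mul_comm]
  simpa only [bernoulliProd, update_eq_self, smul_eq_mul, mul_ite, mul_zero, Fintype.sum_ite_eq']
    using this

lemma hasDerivAt_sum_bernoulliProd_update_mul_hammingObjective (θ : ι → ℝ) (i : ι)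
    (w : ι → Bool) (m M₀ c : ℝ) :
    HasDerivAt (fun t => ∑ z, bernoulliProd (update θ i t) z * hammingObjective w m M₀ c z)
      (boolSign (w i) * (c + (m - M₀) * ∏ j ∈ univ.erase i, bernoulliWeight (θ j) (w j)))
      (θ i) := by
  simp only [sum_bernoulliProd_mul_hammingObjective]
  have hsum := hasDerivAt_sum_bernoulliWeight_update θ i (fun j => !w j) (θ i)
  refine (((hsum.const_mul c).const_sub M₀).add
    ((hasDerivAt_bernoulliProd_update θ i w).const_mul (m - M₀))).congr_deriv ?_
  rw [boolSign_not]
  ring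

lemma add_mul_prod_erase_nonpos_of_alignment {θ : ι → ℝ} (hθ : ∀ j, θ j ∈ Set.Ioo 0 1)
    (w : ι → Bool) (m M₀ c : ℝ) (i : ι)
    (halign : -deriv (fun t => ∑ z, bernoulliProd (update θ i t) z * hammingObjective w m M₀ c z) (θ i)
      * deriv (fun t => bernoulliProd (update θ i t) w) (θ i) ≥ 0) :
    c + (m - M₀) * ∏ j ∈ univ.erase i, bernoulliWeight (θ j) (w j) ≤ 0 := by
  set C := ∏ j ∈ univ.erase i, bernoulliWeight (θ j) (w j)
  have hC : 0 < C := prod_pos fun j _ => bernoulliWeight_pos (hθ j) (w j)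
  rw [(hasDerivAt_sum_bernoulliProd_update_mul_hammingObjective θ i w m M₀ c).deriv,
    (hasDerivAt_bernoulliProd_update θ i w).deriv] at halign
  have hprod : -(boolSign (w i) * (c + (m - M₀) * C)) * (boolSign (w i) * C)
      = -((c + (m - M₀) * C) * C) := by
    linear_combination (-((c + (m - M₀) * C) * C)) * boolSign_mul_self (w i)
  nlinarith

lemma prod_erase_bernoulliWeight_le_pow {θ : ι → ℝ} (hθ : ∀ j, θ j ∈ Set.Ioo 0 1) {w : ι → Bool}
    {q : ℝ} (hq : ∀ j, bernoulliWeight (θ j) (w j) ≤ q) (i : ι) :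
    ∏ j ∈ univ.erase i, bernoulliWeight (θ j) (w j) ≤ q ^ (Fintype.card ι - 1) := by
  calc ∏ j ∈ univ.erase i, bernoulliWeight (θ j) (w j) ≤ ∏ _j ∈ univ.erase i, q :=
        prod_le_prod (fun j _ => (bernoulliWeight_pos (hθ j) (w j)).le) fun j _ => hq j
    _ = q ^ (Fintype.card ι - 1) := by rw [prod_const, card_erase_of_mem (mem_univ i), card_univ]

end BernoulliProduct

theorem unwanted_generalization_corollary_general (d : ℕ) (hd : 0 < d) (zstar : Fin d → Bool)
    (m M0 ΔM : ℝ) (hΔM : 0 < ΔM)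
    (θ : Fin d → ℝ) (hθ : ∀ j, θ j ∈ Set.Ioo (0 : ℝ) 1)
    (ε : ℝ)
    (hmax_le : ∀ j, (if zstar j then θ j else 1 - θ j) ≤ 1 - ε) :
    let dH : (Fin d → Bool) → (Fin d → Bool) → ℕ :=
      fun z z' => (Finset.univ.filter fun j => z j ≠ z' j).card
    let J : (Fin d → Bool) → ℝ :=
      fun z => if z = zstar then m else M0 - (dH z zstar : ℝ) * ΔM / d
    let P : (Fin d → ℝ) → (Fin d → Bool) → ℝ := fun t z => ∏ j, if z j then t j else 1 - t j
    (∀ i : Fin d,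
        (-(deriv (fun t => ∑ z : Fin d → Bool, P (Function.update θ i t) z * J z) (θ i)))
          * deriv (fun t => P (Function.update θ i t) zstar) (θ i) ≥ 0)
      → m ≤ M0 - ΔM / d * (1 / (1 - ε)) ^ (d - 1) := by
  intro dH J P hgrad
  set i : Fin d := ⟨0, hd⟩
  set C := ∏ j ∈ univ.erase i, bernoulliWeight (θ j) (zstar j)
  have hJ : J = hammingObjective zstar m M0 (ΔM / d) := by
    funext z
    simp only [J, dH, hammingObjective, hammingDist, mul_div_assoc]
  have hgap : ΔM / d + (m - M0) * C ≤ 0 :=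
    add_mul_prod_erase_nonpos_of_alignment hθ zstar m M0 (ΔM / d) i (hJ ▸ hgrad i)
  have hC_pos : 0 < C := prod_pos fun j _ => bernoulliWeight_pos (hθ j) (zstar j)
  have hC_le : C ≤ (1 - ε) ^ (d - 1) := by
    simpa only [Fintype.card_fin] using prod_erase_bernoulliWeight_le_pow hθ hmax_le i
  have hc : 0 ≤ ΔM / d := div_nonneg hΔM.le (Nat.cast_nonneg d)
  calc m ≤ M0 - ΔM / d / C := by
        rw [le_sub_iff_add_le, ← le_sub_iff_add_le', div_le_iff₀ hC_pos]
        linarith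
    _ ≤ M0 - ΔM / d * (1 / (1 - ε)) ^ (d - 1) := by
        rw [one_div_pow, mul_one_div]
        exact sub_le_sub_left (div_le_div_of_nonneg_left hc hC_pos hC_le) M0

/-- Corollary of the unwanted generalization theorem: if `max_i p_{θ_i}(z*_i) = 1 − ε` with
`ε ∈ (0,1)`, then gradient alignment at every coordinate requires
`m ≤ M₀ − (ΔM/d)·(1/(1−ε))^{d−1}`. -/
theorem unwanted_generalization_corollary (d : ℕ) (hd : 0 < d) (zstar : Fin d → Bool)
    (m M0 ΔM : ℝ) (hΔM : 0 < ΔM) (hm : m < M0 - ΔM)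
    (θ : Fin d → ℝ) (hθ : ∀ j, θ j ∈ Set.Ioo (0 : ℝ) 1)
    (ε : ℝ) (hε : ε ∈ Set.Ioo (0 : ℝ) 1)
    (hmax_le : ∀ j, (if zstar j then θ j else 1 - θ j) ≤ 1 - ε)
    (hmax_eq : ∃ j, (if zstar j then θ j else 1 - θ j) = 1 - ε) :
    let dH : (Fin d → Bool) → (Fin d → Bool) → ℕ :=
      fun z z' => (Finset.univ.filter fun j => z j ≠ z' j).card
    let J : (Fin d → Bool) → ℝ :=
      fun z => if z = zstar then m else M0 - (dH z zstar : ℝ) * ΔM / d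
    let P : (Fin d → ℝ) → (Fin d → Bool) → ℝ := fun t z => ∏ j, if z j then t j else 1 - t j
    (∀ i : Fin d,
        (-(deriv (fun t => ∑ z : Fin d → Bool, P (Function.update θ i t) z * J z) (θ i)))
          * deriv (fun t => P (Function.update θ i t) zstar) (θ i) ≥ 0)
      → m ≤ M0 - ΔM / d * (1 / (1 - ε)) ^ (d - 1) :=
  unwanted_generalization_corollary_general d hd zstar m M0 ΔM hΔM θ hθ ε hmax_le
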